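/- arXiv:2601.17852 — 6 statements merged into one kernel-verified Lean document; each statement's English description precedes it below -/
import Mathlib

section
/- Let C ⊂ ℙ^r be a projective scheme of pure dimension 1 and degree d > 0, and let Γ be a general hyperplane section of C. Then the arithmetic genus satisfies p_a(C) ≤ Σ_{i=1}^∞ (d − h_Γ(i)), where h_Γ is the Hilbert function of Γ. -/
open MvPolynomial

attribute [local instance] MvPolynomial.gradedAlgebra

/-- Hilbert function of the subscheme of `ℙʳ` cut out by the homogeneous ideal `I`:
dimension of the degree-`i` piece of the homogeneous coordinate ring. -/
noncomputable def hilb {m : ℕ} (I : Ideal (MvPolynomial (Fin m) ℂ)) (i : ℕ) : ℕ :=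
  Module.finrank ℂ
    ((MvPolynomial.homogeneousSubmodule (Fin m) ℂ i).map
      (Ideal.Quotient.mkₐ ℂ I).toLinearMap)


variable {m : ℕ}

noncomputable instance hsFD (i : ℕ) : FiniteDimensional ℂ (homogeneousSubmodule (Fin m) ℂ i) :=
  Submodule.finiteDimensional_of_le (S₂ := restrictTotalDegree (Fin m) ℂ i)
    (fun p hp => (mem_restrictTotalDegree _ _ _).mpr ((mem_homogeneousSubmodule i p).mp hp).totalDegree_le)

theorem hc_mem_of_mem {I : Ideal (MvPolynomial (Fin m) ℂ)}
    (hIhom : I.IsHomogeneous (MvPolynomial.homogeneousSubmodule (Fin m) ℂ))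
    {a : MvPolynomial (Fin m) ℂ} (ha : a ∈ I) (i : ℕ) :
    homogeneousComponent i a ∈ I := by
  have := hIhom i ha
  rwa [← DirectSum.Decomposition.decompose'_eq, decomposition.decompose'_apply] at this

set_option maxHeartbeats 1000000 in
set_option synthInstance.maxHeartbeats 100000 in
theorem hilb_add (I : Ideal (MvPolynomial (Fin m) ℂ)) (i : ℕ) :
    hilb I i + Module.finrank ℂ
      ↥((Submodule.restrictScalars ℂ I) ⊓ homogeneousSubmodule (Fin m) ℂ i)
    = Module.finrank ℂ ↥(homogeneousSubmodule (Fin m) ℂ i) := by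
  set g := (Ideal.Quotient.mkₐ ℂ I).toLinearMap with hg
  set f := g.comp (homogeneousSubmodule (Fin m) ℂ i).subtype with hf
  have hkg : LinearMap.ker g = Submodule.restrictScalars ℂ I := by
    ext x
    simp only [hg, LinearMap.mem_ker, AlgHom.toLinearMap_apply, Ideal.Quotient.mkₐ_eq_mk,
      Ideal.Quotient.eq_zero_iff_mem, Submodule.restrictScalars_mem]
  have hr : LinearMap.range f = (homogeneousSubmodule (Fin m) ℂ i).map g := by
    rw [hf, LinearMap.range_comp, Submodule.range_subtype]
  have hk : LinearMap.ker f =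
      Submodule.comap (homogeneousSubmodule (Fin m) ℂ i).subtype
        ((Submodule.restrictScalars ℂ I) ⊓ homogeneousSubmodule (Fin m) ℂ i) := by
    rw [hf, LinearMap.ker_comp, hkg, Submodule.comap_inf, Submodule.comap_subtype_self, inf_top_eq]
  have e2 := Submodule.comapSubtypeEquivOfLe
    (inf_le_right : (Submodule.restrictScalars ℂ I) ⊓ homogeneousSubmodule (Fin m) ℂ i ≤ _)
  have e3 : Module.finrank ℂ ↥(LinearMap.ker f) = Module.finrank ℂ
      ↥((Submodule.restrictScalars ℂ I) ⊓ homogeneousSubmodule (Fin m) ℂ i) := by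
    rw [hk]; exact e2.finrank_eq
  have h3 := LinearMap.finrank_range_add_finrank_ker f
  rw [hr] at h3
  show Module.finrank ℂ ↥((homogeneousSubmodule (Fin m) ℂ i).map g) + _ = _
  rw [← e3]; exact h3

theorem hc_mul {ℓ : MvPolynomial (Fin m) ℂ} (hℓ : ℓ ∈ homogeneousSubmodule (Fin m) ℂ 1)
    (i : ℕ) (b : MvPolynomial (Fin m) ℂ) :
    homogeneousComponent (i + 1) (ℓ * b) = ℓ * homogeneousComponent i b := by
  have hℓ' : ℓ.IsHomogeneous 1 := (mem_homogeneousSubmodule 1 ℓ).mp hℓ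
  conv_lhs => rw [← sum_homogeneousComponent b, Finset.mul_sum, map_sum]
  have step : ∀ j ∈ Finset.range (b.totalDegree + 1),
      homogeneousComponent (i + 1) (ℓ * homogeneousComponent j b)
        = if j = i then ℓ * homogeneousComponent j b else 0 := by
    intro j _
    have hmem : ℓ * homogeneousComponent j b ∈ homogeneousSubmodule (Fin m) ℂ (1 + j) :=
      (mem_homogeneousSubmodule _ _).mpr (hℓ'.mul (homogeneousComponent_isHomogeneous j b))
    rw [homogeneousComponent_of_mem hmem]
    congr 1
    simp only [eq_iff_iff]
    omega
  rw [Finset.sum_congr rfl step, Finset.sum_ite_eq' (Finset.range (b.totalDegree + 1)) i]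
  split
  · rfl
  · next h =>
    rw [homogeneousComponent_eq_zero, mul_zero]
    simp only [Finset.mem_range] at h
    omega

variable {ℓ : MvPolynomial (Fin m) ℂ}

theorem mulLeft_inj (hℓ0 : ℓ ≠ 0) : Function.Injective (LinearMap.mulLeft ℂ ℓ) := by
  intro a b h
  simp only [LinearMap.mulLeft_apply] at h
  exact mul_left_cancel₀ hℓ0 h

theorem finrank_map_mulLeft (hℓ0 : ℓ ≠ 0) (W : Submodule ℂ (MvPolynomial (Fin m) ℂ)) :
    Module.finrank ℂ ↥(W.map (LinearMap.mulLeft ℂ ℓ)) = Module.finrank ℂ ↥W :=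
  (Submodule.equivMapOfInjective _ (mulLeft_inj hℓ0) W).finrank_eq.symm

theorem L_le (hℓ : ℓ ∈ homogeneousSubmodule (Fin m) ℂ 1) (i : ℕ) :
    Submodule.map (LinearMap.mulLeft ℂ ℓ) (homogeneousSubmodule (Fin m) ℂ i)
      ≤ homogeneousSubmodule (Fin m) ℂ (i + 1) := by
  rintro _ ⟨s, hs, rfl⟩
  simp only [LinearMap.mulLeft_apply]
  rw [mem_homogeneousSubmodule, show i + 1 = 1 + i from by omega]
  exact ((mem_homogeneousSubmodule 1 ℓ).mp hℓ).mul ((mem_homogeneousSubmodule i s).mp hs)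

theorem piece_sup (I : Ideal (MvPolynomial (Fin m) ℂ))
    (hIhom : I.IsHomogeneous (MvPolynomial.homogeneousSubmodule (Fin m) ℂ))
    (hℓ : ℓ ∈ homogeneousSubmodule (Fin m) ℂ 1) (i : ℕ) :
    Submodule.restrictScalars ℂ (I ⊔ Ideal.span {ℓ}) ⊓ homogeneousSubmodule (Fin m) ℂ (i + 1)
    = (Submodule.restrictScalars ℂ I ⊓ homogeneousSubmodule (Fin m) ℂ (i + 1))
      ⊔ Submodule.map (LinearMap.mulLeft ℂ ℓ) (homogeneousSubmodule (Fin m) ℂ i) := by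
  apply le_antisymm
  · rintro x hx
    obtain ⟨hxJ, hxdeg⟩ := Submodule.mem_inf.mp hx
    rw [Submodule.restrictScalars_mem] at hxJ
    obtain ⟨a, ha, b, hb, rfl⟩ := Submodule.mem_sup.mp hxJ
    obtain ⟨c, rfl⟩ := Ideal.mem_span_singleton.mp hb
    have hx' : homogeneousComponent (i + 1) (a + ℓ * c) = a + ℓ * c := by
      rw [homogeneousComponent_of_mem hxdeg, if_pos rfl]
    rw [← hx', map_add, hc_mul hℓ]
    apply Submodule.mem_sup.mpr
    refine ⟨homogeneousComponent (i + 1) a,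
      Submodule.mem_inf.mpr ⟨Submodule.restrictScalars_mem _ _ _ |>.mpr
        (hc_mem_of_mem hIhom ha _), (mem_homogeneousSubmodule _ _).mpr
        (homogeneousComponent_isHomogeneous _ _)⟩,
      ℓ * homogeneousComponent i c, ⟨homogeneousComponent i c,
        (mem_homogeneousSubmodule _ _).mpr (homogeneousComponent_isHomogeneous _ _), rfl⟩, rfl⟩
  · apply sup_le
    · exact inf_le_inf_right _ (fun x hx => Submodule.restrictScalars_mem _ _ _ |>.mpr
        (Ideal.mem_sup_left (Submodule.restrictScalars_mem _ _ _ |>.mp hx)))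
    · intro x hx
      refine Submodule.mem_inf.mpr ⟨?_, L_le hℓ i hx⟩
      obtain ⟨s, _, rfl⟩ := hx
      simp only [LinearMap.mulLeft_apply, Submodule.restrictScalars_mem]
      exact Ideal.mem_sup_right (Ideal.mul_mem_right s _ (Ideal.mem_span_singleton_self ℓ))

theorem piece_inf (I : Ideal (MvPolynomial (Fin m) ℂ))
    (hℓ : ℓ ∈ homogeneousSubmodule (Fin m) ℂ 1)
    (hgen : ∀ f : MvPolynomial (Fin m) ℂ, ℓ * f ∈ I → f ∈ I) (i : ℕ) :
    (Submodule.restrictScalars ℂ I ⊓ homogeneousSubmodule (Fin m) ℂ (i + 1))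
      ⊓ Submodule.map (LinearMap.mulLeft ℂ ℓ) (homogeneousSubmodule (Fin m) ℂ i)
    = Submodule.map (LinearMap.mulLeft ℂ ℓ)
        (Submodule.restrictScalars ℂ I ⊓ homogeneousSubmodule (Fin m) ℂ i) := by
  apply le_antisymm
  · rintro x hx
    obtain ⟨⟨hxI, -⟩, s, hs, rfl⟩ := Submodule.mem_inf.mp hx
    simp only [LinearMap.mulLeft_apply, Submodule.restrictScalars_mem] at hxI ⊢
    exact ⟨s, Submodule.mem_inf.mpr ⟨Submodule.restrictScalars_mem _ _ _ |>.mpr (hgen s hxI), hs⟩, rfl⟩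
  · rintro _ ⟨s, hs, rfl⟩
    obtain ⟨hsI, hsdeg⟩ := Submodule.mem_inf.mp hs
    refine Submodule.mem_inf.mpr ⟨Submodule.mem_inf.mpr ⟨?_, ?_⟩, ⟨s, hsdeg, rfl⟩⟩
    · simp only [LinearMap.mulLeft_apply, Submodule.restrictScalars_mem] at hsI ⊢
      exact Ideal.mul_mem_left _ _ hsI
    · exact L_le hℓ i ⟨s, hsdeg, rfl⟩

theorem hilb_key (I : Ideal (MvPolynomial (Fin m) ℂ))
    (hIhom : I.IsHomogeneous (MvPolynomial.homogeneousSubmodule (Fin m) ℂ))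
    (hℓ : ℓ ∈ homogeneousSubmodule (Fin m) ℂ 1) (hℓ0 : ℓ ≠ 0)
    (hgen : ∀ f : MvPolynomial (Fin m) ℂ, ℓ * f ∈ I → f ∈ I) (i : ℕ) :
    hilb I (i + 1) = hilb I i + hilb (I ⊔ Ideal.span {ℓ}) (i + 1) := by
  haveI i1 : FiniteDimensional ℂ
      ↥(Submodule.restrictScalars ℂ I ⊓ homogeneousSubmodule (Fin m) ℂ (i + 1)) :=
    Submodule.finiteDimensional_of_le inf_le_right
  haveI i2 : FiniteDimensional ℂ
      ↥(Submodule.map (LinearMap.mulLeft ℂ ℓ) (homogeneousSubmodule (Fin m) ℂ i)) :=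
    Submodule.finiteDimensional_of_le (L_le hℓ i)
  have h1 := hilb_add I (i + 1)
  have h2 := hilb_add I i
  have h3 := hilb_add (I ⊔ Ideal.span {ℓ}) (i + 1)
  rw [piece_sup I hIhom hℓ i] at h3
  have h5 := Submodule.finrank_sup_add_finrank_inf_eq
    (Submodule.restrictScalars ℂ I ⊓ homogeneousSubmodule (Fin m) ℂ (i + 1))
    (Submodule.map (LinearMap.mulLeft ℂ ℓ) (homogeneousSubmodule (Fin m) ℂ i))
  rw [piece_inf I hℓ hgen i, finrank_map_mulLeft hℓ0, finrank_map_mulLeft hℓ0] at h5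
  omega

theorem hom0_eq_C {p : MvPolynomial (Fin m) ℂ} (hp : p ∈ homogeneousSubmodule (Fin m) ℂ 0) :
    p = C (coeff 0 p) := by
  have h0 := (totalDegree_eq_zero_iff (Fin m) p).mp
    (Nat.le_zero.mp ((mem_homogeneousSubmodule 0 p).mp hp).totalDegree_le)
  ext d
  rcases eq_or_ne d 0 with rfl | hd
  · classical simp [coeff_C]
  · classical
    rw [coeff_C, if_neg (fun h' => hd h'.symm)]
    by_contra hc
    exact hd (Finsupp.ext fun x => h0 d (mem_support_iff.mpr hc) x)

theorem hilb_zero (I : Ideal (MvPolynomial (Fin m) ℂ)) (hI : (1 : MvPolynomial (Fin m) ℂ) ∉ I) :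
    hilb I 0 = 1 := by
  have hmap : (homogeneousSubmodule (Fin m) ℂ 0).map (Ideal.Quotient.mkₐ ℂ I).toLinearMap
      = Submodule.span ℂ {(1 : MvPolynomial (Fin m) ℂ ⧸ I)} := by
    apply le_antisymm
    · rintro _ ⟨q, hq, rfl⟩
      rw [hom0_eq_C hq]
      have : (Ideal.Quotient.mkₐ ℂ I).toLinearMap (C (coeff 0 q))
          = (coeff 0 q) • (1 : MvPolynomial (Fin m) ℂ ⧸ I) := by
        simp only [AlgHom.toLinearMap_apply]
        rw [show (C (coeff 0 q) : MvPolynomial (Fin m) ℂ) = algebraMap ℂ _ (coeff 0 q) from rfl,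
          AlgHom.commutes, Algebra.algebraMap_eq_smul_one]
      rw [this]
      exact Submodule.smul_mem _ _ (Submodule.mem_span_singleton_self 1)
    · rw [Submodule.span_le]
      intro x hx
      rw [Set.mem_singleton_iff] at hx
      subst hx
      exact ⟨1, (mem_homogeneousSubmodule _ _).mpr (isHomogeneous_one _ _), by simp⟩
  have h1 : (1 : MvPolynomial (Fin m) ℂ ⧸ I) ≠ 0 := fun h =>
    hI (Ideal.Quotient.eq_zero_iff_mem.mp (by rw [map_one]; exact h))
  rw [hilb, hmap]
  exact finrank_span_singleton h1

theorem hilb_top (i : ℕ) : hilb (⊤ : Ideal (MvPolynomial (Fin m) ℂ)) i = 0 := by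
  haveI : Subsingleton (MvPolynomial (Fin m) ℂ ⧸ (⊤ : Ideal (MvPolynomial (Fin m) ℂ))) :=
    Ideal.Quotient.subsingleton_iff.mpr rfl
  exact Module.finrank_zero_of_subsingleton

theorem hilb_sum (I : Ideal (MvPolynomial (Fin m) ℂ))
    (hIhom : I.IsHomogeneous (MvPolynomial.homogeneousSubmodule (Fin m) ℂ))
    (hℓ : ℓ ∈ homogeneousSubmodule (Fin m) ℂ 1) (hℓ0 : ℓ ≠ 0)
    (hgen : ∀ f : MvPolynomial (Fin m) ℂ, ℓ * f ∈ I → f ∈ I) (n : ℕ) :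
    hilb I n = hilb I 0 + ∑ i ∈ Finset.range n, hilb (I ⊔ Ideal.span {ℓ}) (i + 1) := by
  induction n with
  | zero => simp
  | succ n ih =>
    rw [Finset.sum_range_succ, hilb_key I hIhom hℓ hℓ0 hgen n, ih]
    ring

/-- Lemma (riduzioneseziperp): let `C ⊂ ℙʳ` be a projective scheme of pure dimension 1
and degree `d > 0`, cut out by the homogeneous ideal `I` (its dimension, degree `d` and
arithmetic genus `p = p_a(C) = 1 − χ(O_C)` are expressed by the Hilbert polynomial:
`hilb I i = d·i + 1 − p` for `i ≫ 0`), and let `Γ = C ∩ H` be a general hyperplane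
section: `H = {ℓ = 0}` with `ℓ` a linear form which is a nonzerodivisor on the
homogeneous coordinate ring of `C` (this is what pure dimensionality buys for a
general hyperplane).  Then `p_a(C) ≤ Σ_{i=1}^∞ (d − h_Γ(i))`. -/
theorem stmt_3 (r : ℕ) (I : Ideal (MvPolynomial (Fin (r + 1)) ℂ))
    (hIhom : I.IsHomogeneous (MvPolynomial.homogeneousSubmodule (Fin (r + 1)) ℂ))
    (d : ℕ) (hd : 0 < d) (p : ℤ)
    (hHilbPoly : ∃ N : ℕ, ∀ i ≥ N, (hilb I i : ℤ) = d * i + (1 - p))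
    (ℓ : MvPolynomial (Fin (r + 1)) ℂ) (hℓ : ℓ ∈ MvPolynomial.homogeneousSubmodule (Fin (r + 1)) ℂ 1)
    (hℓ0 : ℓ ≠ 0)
    (hgen : ∀ f : MvPolynomial (Fin (r + 1)) ℂ, ℓ * f ∈ I → f ∈ I) :
    p ≤ ∑' i : ℕ, ((d : ℤ) - hilb (I ⊔ Ideal.span {ℓ}) (i + 1)) := by
  obtain ⟨N, hN⟩ := hHilbPoly
  set J := I ⊔ Ideal.span {ℓ} with hJ
  have hIne : (1 : MvPolynomial (Fin (r + 1)) ℂ) ∉ I := by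
    intro h1
    have hT : I = ⊤ := (Ideal.eq_top_iff_one I).mpr h1
    have e1 := hN N le_rfl
    have e2 := hN (N + 1) (by omega)
    rw [hT, hilb_top] at e1 e2
    have e3 : (d : ℤ) = 0 := by push_cast at e1 e2 ⊢; linear_combination e1 - e2
    have : d = 0 := by exact_mod_cast e3
    omega
  have h0 : hilb I 0 = 1 := hilb_zero I hIne
  have hJd : ∀ i, N ≤ i → (hilb J (i + 1) : ℤ) = d := by
    intro i hi
    have k := hilb_key I hIhom hℓ hℓ0 hgen i
    have e1 := hN i hi
    have e2 := hN (i + 1) (by omega)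
    have hcast : (hilb I (i + 1) : ℤ) = (hilb I i : ℤ) + (hilb J (i + 1) : ℤ) := by
      exact_mod_cast congrArg (Nat.cast : ℕ → ℤ) k
    rw [e1, e2] at hcast
    push_cast at hcast ⊢
    linear_combination -hcast
  have htsum : (∑' i : ℕ, ((d : ℤ) - hilb J (i + 1)))
      = ∑ i ∈ Finset.range N, ((d : ℤ) - hilb J (i + 1)) := by
    refine tsum_eq_sum ?_
    intro i hi
    rw [hJd i (by simpa using hi)]
    ring
  rw [htsum, Finset.sum_sub_distrib, Finset.sum_const, Finset.card_range]
  have hS := hilb_sum I hIhom hℓ hℓ0 hgen N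
  have hSZ : (hilb I N : ℤ) = 1 + ∑ i ∈ Finset.range N, (hilb J (i + 1) : ℤ) := by
    rw [hS, h0]; push_cast; ring
  have hNN := hN N le_rfl
  have hsmul : (N : ℕ) • (d : ℤ) = (N : ℤ) * d := by
    rw [nsmul_eq_mul]
  rw [hsmul]
  linarith [hSZ, hNN]
end

section
/- Let C ⊆ ℙ^r be a projective scheme of dimension 1 and degree d > 0. Then p_a(C) ≤ (d−1 choose 2). -/
/-!
Fix a monomial order and let `Λ_i` be the set of degree-`i` monomials that are not leading
monomials of elements of `I_i`. Comparing leading monomials gives `#Λ_i = hilb I i`, and since `I`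
is an ideal, the shadow of `Λ_(i+1)` (the monomials obtained by lowering one exponent) lies in
`Λ_i`. For `i ≫ 0` the shadow of `Λ_(i+1)` is therefore at least `d` smaller than `Λ_(i+1)`.
A Macaulay-type estimate, proved by slicing along the first variable, says that a set of degree-`D`
monomials whose shadow is `t ≤ D + 2` smaller has at least `(t choose 2) + (D + 2 - t) t` elements;
for `D = i + 1` and `t = d` this rearranges to `p ≤ (d - 1 choose 2)`.
-/

open MvPolynomial

attribute [local instance] MvPolynomial.gradedAlgebra

open Finset Finsupp Module

-- `t` is a difference of cardinalities, hence may be negative.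
def dropBound (E : ℕ) (t : ℤ) : ℕ := ∑ j ∈ range (E + 2), min t.toNat j

lemma dropBound_mono (E : ℕ) : Monotone (dropBound E) :=
  fun _ _ h => sum_le_sum fun _ _ => by omega

lemma dropBound_zero (t : ℤ) : dropBound 0 t = min t.toNat 1 := by
  simp [dropBound, sum_range_succ]

lemma dropBound_succ (E : ℕ) (t : ℤ) :
    dropBound (E + 1) t = dropBound E t + min t.toNat (E + 2) :=
  sum_range_succ _ _

lemma dropBound_add_le_of_pos {E : ℕ} {m : ℤ} (hm : 0 < m) (t : ℤ) :
    dropBound (E + 1) (m + t) ≤ dropBound (E + 1) m + dropBound E t := by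
  rw [dropBound, dropBound, dropBound, sum_range_succ', sum_range_succ' (fun j => min m.toNat j),
    Nat.min_zero, Nat.min_zero, add_zero, add_zero, ← sum_add_distrib]
  gcongr with j
  omega

lemma dropBound_succ_add_le {E : ℕ} {m t : ℤ} {b F : ℕ} (hm : dropBound (E + 1) m ≤ b)
    (hmt : m + t ≤ b) (ht : dropBound E t ≤ F) : dropBound (E + 1) (m + t) ≤ b + F := by
  rcases lt_or_ge 0 m with hpos | hnonpos
  · linarith [dropBound_add_le_of_pos hpos (E := E) t]
  · rw [dropBound_succ]
    have := dropBound_mono E (show m + t ≤ t by omega)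
    omega

lemma sum_range_add_le_of_add_le {m : ℕ → ℤ} {β : ℕ → ℕ} {n : ℕ}
    (h : ∀ k < n, m k + β (k + 1) ≤ β k) : ∑ k ∈ range n, m k + β n ≤ β 0 := by
  induction n with
  | zero => simp
  | succ n ih =>
    rw [sum_range_succ]
    linarith [ih fun k hk => h k (by omega), h n (by omega)]

lemma dropBound_sum_le_sum (D : ℕ) (β : ℕ → ℕ) (m : ℕ → ℤ)
    (hm : ∀ k ≤ D, dropBound (D - k) (m k) ≤ β k) (hmβ : ∀ k ≤ D, m k + β (k + 1) ≤ β k) :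
    dropBound D (∑ k ∈ range (D + 1), m k) ≤ ∑ k ∈ range (D + 1), β k := by
  induction D generalizing β m with
  | zero => simpa using hm 0 le_rfl
  | succ D ih =>
    have htel := sum_range_add_le_of_add_le (n := D + 2) fun k hk => hmβ k (by omega)
    rw [sum_range_succ' m, sum_range_succ' β, add_comm _ (m 0), add_comm _ (β 0)]
    rw [sum_range_succ' m] at htel
    refine dropBound_succ_add_le (hm 0 (by omega)) (by omega)
      (ih _ _ (fun k hk => ?_) fun k hk => hmβ (k + 1) (by omega))
    simpa using hm (k + 1) (by omega)

lemma dropBound_natCast {E t : ℕ} (h : t ≤ E + 2) :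
    dropBound E t = t.choose 2 + (E + 2 - t) * t := by
  rw [dropBound, ← sum_range_add_sum_Ico _ h, Nat.choose_two_right, ← sum_range_id]
  congr 1
  · exact sum_congr rfl fun j hj => by simp at hj; omega
  · rw [sum_congr rfl fun j hj => (by simp at hj; omega : min (t : ℤ).toNat j = t), sum_const,
      Nat.card_Ico, smul_eq_mul]

lemma dropBound_natCast_add_choose_two {E t : ℕ} (ht : 0 < t) (h : t ≤ E + 2) :
    dropBound E t + (t - 1).choose 2 = E * t + 1 := by
  rw [dropBound_natCast h]
  have key : ((t.choose 2 + (E + 2 - t) * t + (t - 1).choose 2 : ℕ) : ℚ) = E * t + 1 := by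
    push_cast [Nat.cast_choose_two, Nat.cast_sub ht, Nat.cast_sub h]
    ring
  exact_mod_cast key

section
variable {σ : Type*} [DecidableEq σ]

noncomputable def monomialShadow (B : Finset (σ →₀ ℕ)) : Finset (σ →₀ ℕ) :=
  B.biUnion fun μ => μ.support.image fun l => μ - single l 1

lemma mem_monomialShadow {B : Finset (σ →₀ ℕ)} {ν : σ →₀ ℕ} :
    ν ∈ monomialShadow B ↔ ∃ l, ν + single l 1 ∈ B := by
  simp only [monomialShadow, mem_biUnion, mem_image, Finsupp.mem_support_iff]
  constructor
  · rintro ⟨μ, hμ, l, hl, rfl⟩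
    refine ⟨l, ?_⟩
    rwa [tsub_add_cancel_of_le (single_le_iff.2 (Nat.one_le_iff_ne_zero.2 hl))]
  · rintro ⟨l, hl⟩
    exact ⟨_, hl, l, by simp, add_tsub_cancel_right ν _⟩

lemma degree_add_one_of_mem_monomialShadow {B : Finset (σ →₀ ℕ)} {D : ℕ}
    (hB : ∀ μ ∈ B, μ.degree = D) {ν : σ →₀ ℕ} (hν : ν ∈ monomialShadow B) :
    ν.degree + 1 = D := by
  obtain ⟨l, hl⟩ := mem_monomialShadow.1 hν
  simpa using hB _ hl

end

section
variable {n : ℕ}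

noncomputable def sliceAt (C : Finset (Fin (n + 1) →₀ ℕ)) (k : ℕ) : Finset (Fin n →₀ ℕ) :=
  (C.filter (· 0 = k)).image tail

lemma mem_sliceAt {C : Finset (Fin (n + 1) →₀ ℕ)} {k : ℕ} {ν : Fin n →₀ ℕ} :
    ν ∈ sliceAt C k ↔ cons k ν ∈ C := by
  simp only [sliceAt, mem_image, mem_filter]
  constructor
  · rintro ⟨μ, ⟨hμ, rfl⟩, rfl⟩
    rwa [cons_tail]
  · exact fun h => ⟨_, ⟨h, cons_zero _ _⟩, tail_cons _ _⟩

lemma card_eq_sum_card_sliceAt {C : Finset (Fin (n + 1) →₀ ℕ)} {E : ℕ} (hC : ∀ μ ∈ C, μ 0 ≤ E) :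
    #C = ∑ k ∈ range (E + 1), #(sliceAt C k) := by
  rw [card_eq_sum_card_fiberwise fun μ hμ => mem_range.2 (Nat.lt_succ_of_le (hC μ hμ))]
  refine sum_congr rfl fun k _ => (card_image_of_injOn fun μ hμ μ' hμ' h => ?_).symm
  rw [← cons_tail μ, ← cons_tail μ', h, (mem_filter.1 hμ).2, (mem_filter.1 hμ').2]

lemma degree_cons (k : ℕ) (ν : Fin n →₀ ℕ) : (cons k ν).degree = k + ν.degree := by
  simp [degree_eq_sum, Fin.sum_univ_succ, cons_zero, cons_succ]

lemma cons_add_cons (a b : ℕ) (ν ν' : Fin n →₀ ℕ) :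
    cons a ν + cons b ν' = cons (a + b) (ν + ν') := by
  ext j
  cases j using Fin.cases <;> simp [cons_zero, cons_succ]

lemma monomialShadow_sliceAt_subset (B : Finset (Fin (n + 1) →₀ ℕ)) (k : ℕ) :
    monomialShadow (sliceAt B k) ⊆ sliceAt (monomialShadow B) k := by
  intro ν hν
  obtain ⟨l, hl⟩ := mem_monomialShadow.1 hν
  refine mem_sliceAt.2 (mem_monomialShadow.2 ⟨l.succ, ?_⟩)
  rw [← cons_zero_single_eq_single_succ, cons_add_cons, add_zero]
  exact mem_sliceAt.1 hl

lemma sliceAt_succ_subset (B : Finset (Fin (n + 1) →₀ ℕ)) (k : ℕ) :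
    sliceAt B (k + 1) ⊆ sliceAt (monomialShadow B) k := by
  intro ν hν
  refine mem_sliceAt.2 (mem_monomialShadow.2 ⟨0, ?_⟩)
  rw [← cons_zero_eq_single_zero, cons_add_cons, add_zero]
  exact mem_sliceAt.1 hν

end

theorem dropBound_card_sub_card_monomialShadow_le :
    ∀ {n : ℕ} (D : ℕ) (B : Finset (Fin n →₀ ℕ)), (∀ μ ∈ B, μ.degree = D) →
      dropBound D (#B - #(monomialShadow B)) ≤ #B
  | 0, D, B, hB => by
    rcases B.eq_empty_or_nonempty with rfl | ⟨μ, hμ⟩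
    · simp [dropBound]
    · have hD : D = 0 := by rw [← hB μ hμ, Subsingleton.elim μ 0, map_zero]
      subst hD
      rw [dropBound_zero]
      exact (min_le_right _ _).trans (card_pos.2 ⟨μ, hμ⟩)
  | n + 1, D, B, hB => by
    have hslice_deg : ∀ k ≤ D, ∀ ν ∈ sliceAt B k, ν.degree = D - k := fun k _ ν hν => by
      have := hB _ (mem_sliceAt.1 hν)
      rw [degree_cons] at this
      omega
    have hB_card : #B = ∑ k ∈ range (D + 1), #(sliceAt B k) :=
      card_eq_sum_card_sliceAt fun μ hμ => (le_degree 0 μ).trans (hB μ hμ).le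
    have hshadow_card :
        #(monomialShadow B) = ∑ k ∈ range (D + 1), #(sliceAt (monomialShadow B) k) :=
      card_eq_sum_card_sliceAt fun μ hμ => by
        have := degree_add_one_of_mem_monomialShadow hB hμ
        have := le_degree 0 μ
        omega
    have hmax : ∀ k, max #(monomialShadow (sliceAt B k)) #(sliceAt B (k + 1)) ≤
        #(sliceAt (monomialShadow B) k) := fun k =>
      max_le (card_le_card (monomialShadow_sliceAt_subset B k))
        (card_le_card (sliceAt_succ_subset B k))
    -- The drops `#B_k - max #∂B_k #B_(k+1)` of the slices add up to at least `#B - #∂B`, and each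
    -- is controlled by induction on the number of variables.
    have hslices := dropBound_sum_le_sum D (fun k => #(sliceAt B k))
      (fun k => #(sliceAt B k) - max #(monomialShadow (sliceAt B k)) #(sliceAt B (k + 1)))
      (fun k hk => (dropBound_mono _ (by omega)).trans
        (dropBound_card_sub_card_monomialShadow_le _ _ (hslice_deg k hk)))
      (fun k _ => by omega)
    refine (dropBound_mono D ?_).trans (hslices.trans_eq hB_card.symm)
    rw [hB_card, hshadow_card]
    push_cast
    rw [← sum_sub_distrib]
    exact sum_le_sum fun k _ => by have := hmax k; omega

lemma finrank_map_add_finrank_inf_ker {K V V₂ : Type*} [Field K] [AddCommGroup V] [Module K V]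
    [AddCommGroup V₂] [Module K V₂] (f : V →ₗ[K] V₂) (W : Submodule K V) [FiniteDimensional K W] :
    finrank K (W.map f) + finrank K ↥(W ⊓ LinearMap.ker f) = finrank K W := by
  rw [← LinearMap.range_domRestrict, ← Submodule.map_comap_subtype,
    Submodule.finrank_map_subtype_eq, ← LinearMap.ker_domRestrict]
  exact LinearMap.finrank_range_add_finrank_ker _

section
variable {σ K : Type*} [Field K] (m : MonomialOrder σ)

def leadingExponents (W : Submodule K (MvPolynomial σ K)) : Set (σ →₀ ℕ) :=
  m.degree '' ((W : Set (MvPolynomial σ K)) \ {0})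

variable {m}

lemma mem_leadingExponents {W : Submodule K (MvPolynomial σ K)} {a : σ →₀ ℕ} :
    a ∈ leadingExponents m W ↔ ∃ f ∈ W, f ≠ 0 ∧ m.degree f = a := by
  simp [leadingExponents, and_assoc]

lemma leadingExponents_mono {W W' : Submodule K (MvPolynomial σ K)} (h : W ≤ W') :
    leadingExponents m W ⊆ leadingExponents m W' :=
  Set.image_mono (Set.sdiff_subset_sdiff_left h)

lemma leadingExponents_finite (W : Submodule K (MvPolynomial σ K)) [FiniteDimensional K W] :
    (leadingExponents m W).Finite := by
  classical
  obtain ⟨s, hs⟩ := (Submodule.fg_iff_finiteDimensional W).2 ‹_›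
  have hW : W ≤ restrictSupport K ↑(s.biUnion MvPolynomial.support) := hs ▸ Submodule.span_le.2
    fun g hg => (mem_restrictSupport_iff ..).2 (coe_subset.2 (subset_biUnion_of_mem _ hg))
  refine (s.biUnion MvPolynomial.support).finite_toSet.subset ?_
  rintro _ ⟨f, ⟨hfW, hf0⟩, rfl⟩
  exact (mem_restrictSupport_iff ..).1 (hW hfW) (m.degree_mem_support hf0)

lemma notMem_leadingExponents_inf_ker_lcoeff (W : Submodule K (MvPolynomial σ K)) (a : σ →₀ ℕ) :
    a ∉ leadingExponents m (W ⊓ LinearMap.ker (lcoeff K a)) := by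
  rintro ⟨g, ⟨⟨-, hg⟩, hg0⟩, rfl⟩
  exact m.coeff_degree_ne_zero_iff.2 hg0 hg

lemma finrank_inf_ker_lcoeff_add_one {W : Submodule K (MvPolynomial σ K)} [FiniteDimensional K W]
    {g : MvPolynomial σ K} {a : σ →₀ ℕ} (hgW : g ∈ W) (hg : coeff a g ≠ 0) :
    finrank K ↥(W ⊓ LinearMap.ker (lcoeff K a)) + 1 = finrank K W := by
  have hne : W.map (lcoeff K a) ≠ ⊥ := fun h => hg <| by
    simpa using (Submodule.eq_bot_iff _).1 h _ (Submodule.mem_map_of_mem hgW)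
  have := (Submodule.finrank_le (W.map (lcoeff K a))).trans_eq (finrank_self K)
  have := Submodule.one_le_finrank_iff.2 hne
  have := finrank_map_add_finrank_inf_ker (lcoeff K a) W
  omega

lemma leadingExponents_eq_insert_of_isMax {W : Submodule K (MvPolynomial σ K)}
    {g : MvPolynomial σ K} (hgW : g ∈ W) (hg0 : g ≠ 0)
    (hmax : ∀ a ∈ leadingExponents m W, m.toSyn a ≤ m.toSyn (m.degree g)) :
    leadingExponents m W =
      insert (m.degree g) (leadingExponents m (W ⊓ LinearMap.ker (lcoeff K (m.degree g)))) := by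
  ext a
  refine ⟨fun ha => ?_, ?_⟩
  · obtain ⟨f, hfW, hf0, rfl⟩ := mem_leadingExponents.1 ha
    rcases eq_or_ne (m.degree f) (m.degree g) with heq | hne
    · exact Or.inl heq
    · refine Or.inr (mem_leadingExponents.2 ⟨f, ⟨hfW, ?_⟩, hf0, rfl⟩)
      simpa using m.coeff_eq_zero_of_lt (lt_of_le_of_ne (hmax _ ha) (m.toSyn.injective.ne hne))
  · rintro (rfl | ha)
    · exact mem_leadingExponents.2 ⟨g, hgW, hg0, rfl⟩
    · exact leadingExponents_mono inf_le_left ha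

lemma ncard_leadingExponents (W : Submodule K (MvPolynomial σ K)) [FiniteDimensional K W] :
    (leadingExponents m W).ncard = finrank K W := by
  induction h : finrank K W generalizing W with
  | zero =>
    rw [Submodule.finrank_eq_zero.1 h]
    simp [leadingExponents]
  | succ k ih =>
    obtain ⟨f, hfW, hf0⟩ := Submodule.exists_mem_ne_zero_of_ne_bot fun (h' : W = ⊥) => by
      rw [h', finrank_bot] at h
      omega
    obtain ⟨_, hg, hmax⟩ := Set.exists_max_image _ m.toSyn (leadingExponents_finite W)
      ⟨_, mem_leadingExponents.2 ⟨f, hfW, hf0, rfl⟩⟩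
    obtain ⟨g, hgW, hg0, rfl⟩ := mem_leadingExponents.1 hg
    have hrank := finrank_inf_ker_lcoeff_add_one hgW (m.coeff_degree_ne_zero_iff.2 hg0)
    rw [leadingExponents_eq_insert_of_isMax hgW hg0 hmax, Set.ncard_insert_of_notMem
      (notMem_leadingExponents_inf_ker_lcoeff W _) (leadingExponents_finite _), ih _ (by omega)]

lemma leadingExponents_homogeneousSubmodule (i : ℕ) :
    leadingExponents m (homogeneousSubmodule σ K i) = {a | a.degree = i} := by
  ext a
  refine ⟨fun ha => ?_, fun ha => ?_⟩
  · obtain ⟨f, hf, hf0, rfl⟩ := mem_leadingExponents.1 ha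
    rw [Set.mem_ofPred_eq, degree_eq_weight_one]
    exact hf (m.coeff_degree_ne_zero_iff.2 hf0)
  · classical
    exact mem_leadingExponents.2 ⟨monomial a 1, isHomogeneous_monomial 1 ha, by simp,
      by simp [m.degree_monomial]⟩

lemma add_single_mem_leadingExponents [DecidableEq σ] (I : Ideal (MvPolynomial σ K)) {i : ℕ}
    {a : σ →₀ ℕ} (ha : a ∈ leadingExponents m (homogeneousSubmodule σ K i ⊓ I.restrictScalars K))
    (l : σ) :
    a + single l 1 ∈
      leadingExponents m (homogeneousSubmodule σ K (i + 1) ⊓ I.restrictScalars K) := by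
  obtain ⟨f, ⟨hfH, hfI⟩, hf0, rfl⟩ := mem_leadingExponents.1 ha
  refine mem_leadingExponents.2
    ⟨X l * f, ⟨?_, I.mul_mem_left _ hfI⟩, mul_ne_zero (X_ne_zero l) hf0, ?_⟩
  · rw [add_comm]
    exact (isHomogeneous_X K l).mul hfH
  · rw [m.degree_mul (X_ne_zero l) hf0, m.degree_X, add_comm]

variable (m) in
open Classical in
noncomputable def standardExponents [Fintype σ] (I : Ideal (MvPolynomial σ K)) (i : ℕ) :
    Finset (σ →₀ ℕ) :=
  (univ.finsuppAntidiag i).filter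
    (· ∉ leadingExponents m (homogeneousSubmodule σ K i ⊓ I.restrictScalars K))

variable [Fintype σ]

lemma mem_standardExponents {I : Ideal (MvPolynomial σ K)} {i : ℕ} {a : σ →₀ ℕ} :
    a ∈ standardExponents m I i ↔
      a.degree = i ∧ a ∉ leadingExponents m (homogeneousSubmodule σ K i ⊓ I.restrictScalars K) := by
  simp [standardExponents, degree_eq_sum]

lemma card_standardExponents (I : Ideal (MvPolynomial σ K)) (i : ℕ) :
    #(standardExponents m I i) =
      finrank K ((homogeneousSubmodule σ K i).map (Ideal.Quotient.mkₐ K I).toLinearMap) := by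
  have := (Submodule.fg_iff_finiteDimensional _).1 (homogeneousSubmodule_fg σ K i)
  have hker : LinearMap.ker (Ideal.Quotient.mkₐ K I).toLinearMap = I.restrictScalars K := by
    ext f
    simp [Ideal.Quotient.eq_zero_iff_mem]
  have hcoe : (standardExponents m I i : Set (σ →₀ ℕ)) =
      leadingExponents m (homogeneousSubmodule σ K i) \
        leadingExponents m (homogeneousSubmodule σ K i ⊓ I.restrictScalars K) := by
    ext a
    simp [mem_standardExponents, leadingExponents_homogeneousSubmodule]
  have hrank := finrank_map_add_finrank_inf_ker (Ideal.Quotient.mkₐ K I).toLinearMap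
    (homogeneousSubmodule σ K i)
  rw [hker] at hrank
  rw [← Set.ncard_coe_finset, hcoe, Set.ncard_sdiff (leadingExponents_mono inf_le_left)
    (leadingExponents_finite _), ncard_leadingExponents, ncard_leadingExponents]
  omega

lemma monomialShadow_standardExponents_subset [DecidableEq σ] (I : Ideal (MvPolynomial σ K))
    (i : ℕ) : monomialShadow (standardExponents m I (i + 1)) ⊆ standardExponents m I i := by
  intro a ha
  obtain ⟨l, hl⟩ := mem_monomialShadow.1 ha
  rw [mem_standardExponents, map_add, degree_single] at hl
  exact mem_standardExponents.2 ⟨by omega, fun h => hl.2 (add_single_mem_leadingExponents I h l)⟩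

end

theorem stmt_4_general (r : ℕ) (I : Ideal (MvPolynomial (Fin (r + 1)) ℂ))
    (d : ℕ) (hd : 0 < d) (p : ℤ)
    (hHilbPoly : ∃ N : ℕ, ∀ i ≥ N, (hilb I i : ℤ) = d * i + (1 - p)) :
    p ≤ ((d - 1).choose 2 : ℤ) := by
  obtain ⟨N, hN⟩ := hHilbPoly
  let B := standardExponents MonomialOrder.lex I (N + d + 1)
  have hcard (i : ℕ) : #(standardExponents MonomialOrder.lex I i) = hilb I i :=
    card_standardExponents I i
  have hshadow : (#(monomialShadow B) : ℤ) ≤ hilb I (N + d) := by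
    exact_mod_cast (card_le_card (monomialShadow_standardExponents_subset I (N + d))).trans_eq
      (hcard _)
  have hdrop : (d : ℤ) ≤ #B - #(monomialShadow B) := by
    have h₀ := hN (N + d) (by omega)
    have h₁ := hN (N + d + 1) (by omega)
    rw [hcard]
    push_cast at h₀ h₁
    linarith
  have hbound : dropBound (N + d + 1) d ≤ hilb I (N + d + 1) := hcard _ ▸
    (dropBound_mono _ hdrop).trans
      (dropBound_card_sub_card_monomialShadow_le _ B fun μ hμ => (mem_standardExponents.1 hμ).1)
  have hclosed := dropBound_natCast_add_choose_two (E := N + d + 1) hd (by omega)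
  have h₁ := hN (N + d + 1) (by omega)
  zify at hbound hclosed
  push_cast at h₁
  linarith

/-- Lemma (planegenus): a projective scheme `C ⊆ ℙʳ` of dimension 1 and degree `d > 0`
(cut out by the homogeneous ideal `I`, with degree `d` and arithmetic genus
`p = 1 − χ(O_C)` read off from the Hilbert polynomial: `hilb I i = d·i + 1 − p` for
`i ≫ 0`) satisfies `p_a(C) ≤ (d−1 choose 2)`. -/
theorem stmt_4 (r : ℕ) (I : Ideal (MvPolynomial (Fin (r + 1)) ℂ))
    (hIhom : I.IsHomogeneous (MvPolynomial.homogeneousSubmodule (Fin (r + 1)) ℂ))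
    (d : ℕ) (hd : 0 < d) (p : ℤ)
    (hHilbPoly : ∃ N : ℕ, ∀ i ≥ N, (hilb I i : ℤ) = d * i + (1 - p)) :
    p ≤ ((d - 1).choose 2 : ℤ) :=
  stmt_4_general r I d hd p hHilbPoly
end

section
/- Let S ⊂ ℙ^r be a smooth projective surface with very ample hyperplane class H_S of degree s = H_S² and sectional genus π (the arithmetic genus of a smooth hyperplane section). Assume S is subcanonical, i.e., the canonical divisor K_S is numerically equivalent to q·H_S for some rational q. Let C ⊂ S be an effective divisor of degree d = C·H_S > 0. Then p_a(C) ≤ d²/(2s) + (d/(2s))(2π − 2 − s) + 1. -/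
/-- Hodge-index bound on a smooth subcanonical surface `S ⊂ ℙʳ`:
`M` is the group of divisor classes of `S` modulo numerical equivalence, `B` the
intersection pairing, `H` the (very ample) hyperplane class with `H² = s > 0` and
sectional genus `π` (adjunction: `2π − 2 = H·(H + K)`), `K` the canonical class,
numerically a rational multiple of `H` (`a•K = b•H`, `a ≠ 0`). The Hodge index
theorem is the hypothesis `∀ x, x·H = 0 → x² ≤ 0`. For an effective divisor `C`
of degree `d = C·H > 0` and arithmetic genus `p` (adjunction: `2p − 2 = C·(C+K)`),
one has `p ≤ d²/(2s) + (d/(2s))(2π − 2 − s) + 1`. -/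
theorem stmt_6 (M : Type*) [AddCommGroup M] [Module ℤ M]
    (B : M →ₗ[ℤ] M →ₗ[ℤ] ℤ) (hsymm : ∀ x y : M, B x y = B y x)
    (H K C : M) (s d π p : ℤ)
    (hodge : ∀ x : M, B x H = 0 → B x x ≤ 0)
    (hs : B H H = s) (hs0 : 0 < s)
    (hd : B C H = d) (hd0 : 0 < d)
    (hsub : ∃ a b : ℤ, a ≠ 0 ∧ a • K = b • H)
    (hadjH : 2 * π - 2 = B H (H + K))
    (hadjC : 2 * p - 2 = B C (C + K)) :
    (p : ℚ) ≤ (d : ℚ) ^ 2 / (2 * s) + (d : ℚ) / (2 * s) * (2 * π - 2 - s) + 1 := by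
  obtain ⟨a, b, ha, hab⟩ := hsub
  have hHC : B H C = d := by rw [hsymm]; exact hd
  -- compute B C K and B H K against a,b
  have hCK : a * B C K = b * d := by
    have h1 : B C (a • K) = B C (b • H) := by rw [hab]
    simpa [map_smul, smul_eq_mul, hd] using h1
  have hHK : a * B H K = b * s := by
    have h1 : B H (a • K) = B H (b • H) := by rw [hab]
    simpa [map_smul, smul_eq_mul, hs] using h1
  have hHK' : B H K = 2 * π - 2 - s := by
    have : 2 * π - 2 = B H H + B H K := by simpa [map_add] using hadjH
    omega
  have hCC : 2 * p - 2 = B C C + B C K := by simpa [map_add] using hadjC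
  -- Hodge index: s•C - d•H
  have hx0 : B (s • C - d • H) H = 0 := by
    simp [map_sub, map_smul, smul_eq_mul, hd, hs]
    ring
  have hx := hodge _ hx0
  have hexp : B (s • C - d • H) (s • C - d • H)
      = s * s * B C C - 2 * s * d * d + d * d * s := by
    simp [map_sub, map_smul, smul_eq_mul, hd, hs, hHC]
    ring
  have hCCle : s * B C C ≤ d * d := by nlinarith [hexp ▸ hx]
  -- s * B C K = d * (2π-2-s)
  have hkey : s * B C K = d * (2 * π - 2 - s) := by
    have : a * (s * B C K) = a * (d * (2 * π - 2 - s)) := by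
      have h2 : a * (2 * π - 2 - s) = b * s := by rw [← hHK']; linarith [hHK]
      nlinarith [hCK, h2]
    exact mul_left_cancel₀ ha this
  have key : 2 * s * p ≤ d ^ 2 + d * (2 * π - 2 - s) + 2 * s := by nlinarith [hCCle, hkey, hCC]
  have h2s : (0 : ℚ) < 2 * s := by positivity
  have hq : ((2 * s * p : ℤ) : ℚ) ≤ ((d ^ 2 + d * (2 * π - 2 - s) + 2 * s : ℤ) : ℚ) := by
    exact_mod_cast key
  push_cast at hq
  have hrw : (d : ℚ) ^ 2 / (2 * s) + (d : ℚ) / (2 * s) * (2 * π - 2 - s) + 1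
      = ((d : ℚ) ^ 2 + d * (2 * π - 2 - s) + 2 * s) / (2 * s) := by
    field_simp
  rw [hrw, le_div_iff₀ h2s]
  linarith [hq]
end

section
/- Let X be an integral projective threefold in ℙ^r, and let D, E be effective Cartier divisors on X with no common components. Let C ⊂ D + E be a curve (closed subscheme of dimension 1), and define C_E by the ideal quotient I_{C_E} = I_C : I_E. Then there is an exact sequence 0 → O_{C_E}(−E) → O_C → O_{C∩E} → 0 of sheaves on X. -/
open MvPolynomial

attribute [local instance] MvPolynomial.gradedAlgebra

/-- The exact sequence `0 → O_{C_E}(−E) → O_C → O_{C∩E} → 0` on the level of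
homogeneous coordinate rings: `X ⊂ ℙʳ` is an integral projective threefold, cut out by
the prime homogeneous ideal `P` (with cubic Hilbert polynomial), `D = {f_D = 0} ∩ X` and
`E = {f_E = 0} ∩ X` are effective Cartier divisors with no common component (no prime
minimal over `(P, f_D)` contains `f_E`), `C ⊂ D + E` is a curve (so `f_D·f_E ∈ I_C`,
and the Hilbert polynomial of `I_C` is linear), and `C_E` is defined by the ideal
quotient `I_{C_E} = I_C : I_E = I_C : (f_E)`.  The sequence is: the map
`O_{C_E}(−E) → O_C` given by multiplication by `f_E` is injective, the composite with
`O_C → O_{C∩E}` is exact, and `O_C → O_{C∩E}` is surjective. -/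
theorem stmt_13 (r : ℕ) (P : Ideal (MvPolynomial (Fin (r + 1)) ℂ))
    (hPhom : P.IsHomogeneous (MvPolynomial.homogeneousSubmodule (Fin (r + 1)) ℂ))
    (hPprime : P.IsPrime)
    (hdim3 : ∃ (N : ℕ) (c₃ c₂ c₁ c₀ : ℚ), 0 < c₃ ∧ ∀ i ≥ N,
      (hilb P i : ℚ) = c₃ * i ^ 3 + c₂ * i ^ 2 + c₁ * i + c₀)
    (fD fE : MvPolynomial (Fin (r + 1)) ℂ)
    (hfDhom : ∃ a : ℕ, 0 < a ∧ fD ∈ MvPolynomial.homogeneousSubmodule (Fin (r + 1)) ℂ a)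
    (hfEhom : ∃ b : ℕ, 0 < b ∧ fE ∈ MvPolynomial.homogeneousSubmodule (Fin (r + 1)) ℂ b)
    (hfD : fD ∉ P) (hfE : fE ∉ P)
    (hnocommon : ¬ ∃ q : Ideal (MvPolynomial (Fin (r + 1)) ℂ), q.IsPrime ∧
      P ≤ q ∧ fD ∈ q ∧ fE ∈ q ∧
      (∀ q' : Ideal (MvPolynomial (Fin (r + 1)) ℂ),
        q'.IsPrime → P ≤ q' → fD ∈ q' → q' ≤ q → q' = q))
    (IC : Ideal (MvPolynomial (Fin (r + 1)) ℂ))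
    (hIChom : IC.IsHomogeneous (MvPolynomial.homogeneousSubmodule (Fin (r + 1)) ℂ))
    (hPC : P ≤ IC) (hCDE : fD * fE ∈ IC)
    (hdim1 : ∃ (N d : ℕ) (c : ℤ), 0 < d ∧ ∀ i ≥ N, (hilb IC i : ℤ) = d * i + c) :
    Function.Injective
      (Submodule.mapQ (Submodule.colon IC (Ideal.span {fE})) IC
        (LinearMap.mulLeft (MvPolynomial (Fin (r + 1)) ℂ) fE)
        (by
          intro x hx
          have hgx := Submodule.mem_colon.mp hx fE (Ideal.subset_span rfl)
          simpa [smul_eq_mul, mul_comm] using hgx)) ∧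
    Function.Exact
      (Submodule.mapQ (Submodule.colon IC (Ideal.span {fE})) IC
        (LinearMap.mulLeft (MvPolynomial (Fin (r + 1)) ℂ) fE)
        (by
          intro x hx
          have hgx := Submodule.mem_colon.mp hx fE (Ideal.subset_span rfl)
          simpa [smul_eq_mul, mul_comm] using hgx))
      (Submodule.mapQ IC (IC ⊔ Ideal.span {fE}) LinearMap.id
        (fun x hx => Submodule.mem_sup_left hx)) ∧
    Function.Surjective
      (Submodule.mapQ IC (IC ⊔ Ideal.span {fE}) LinearMap.id
        (fun x hx => Submodule.mem_sup_left hx)) := by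

  refine ⟨?_, ?_, ?_⟩
  · intro x y h
    obtain ⟨a, rfl⟩ := Submodule.Quotient.mk_surjective _ x
    obtain ⟨b, rfl⟩ := Submodule.Quotient.mk_surjective _ y
    rw [Submodule.mapQ_apply, Submodule.mapQ_apply, Submodule.Quotient.eq] at h
    rw [Submodule.Quotient.eq]
    refine Submodule.mem_colon.mpr fun p hp => ?_
    obtain ⟨c, rfl⟩ := Ideal.mem_span_singleton'.mp hp
    have : c * (fE * a - fE * b) ∈ IC := Ideal.mul_mem_left _ c (by simpa using h)
    have heq : (a - b) • (c * fE) = c * (fE * a - fE * b) := by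
      rw [smul_eq_mul]; ring
    rwa [heq]
  · intro y
    obtain ⟨a, rfl⟩ := Submodule.Quotient.mk_surjective _ y
    constructor
    · intro h0
      rw [Submodule.mapQ_apply, LinearMap.id_coe, id_eq,
        Submodule.Quotient.mk_eq_zero] at h0
      obtain ⟨i, hi, c, hc, hic⟩ := Submodule.mem_sup.mp h0
      obtain ⟨b, rfl⟩ := Ideal.mem_span_singleton'.mp hc
      refine ⟨Submodule.Quotient.mk b, ?_⟩
      rw [Submodule.mapQ_apply, Submodule.Quotient.eq]
      have : fE * b - a = -i := by rw [← hic]; ring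
      rw [LinearMap.mulLeft_apply, this]
      exact neg_mem hi
    · rintro ⟨x, hx⟩
      obtain ⟨b, rfl⟩ := Submodule.Quotient.mk_surjective _ x
      rw [Submodule.mapQ_apply, Submodule.Quotient.eq] at hx
      rw [Submodule.mapQ_apply, LinearMap.id_coe, id_eq,
        Submodule.Quotient.mk_eq_zero]
      rw [LinearMap.mulLeft_apply] at hx
      have h1 : -(fE * b - a) ∈ IC := neg_mem hx
      have h2 : a = -(fE * b - a) + b * fE := by ring
      rw [h2]
      exact Submodule.add_mem_sup h1 (Ideal.mem_span_singleton'.mpr ⟨b, rfl⟩)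
  · intro y
    obtain ⟨a, rfl⟩ := Submodule.Quotient.mk_surjective _ y
    exact ⟨Submodule.Quotient.mk a, by rw [Submodule.mapQ_apply]; rfl⟩
end

section
/- Let X be an integral projective threefold in ℙ^r, C ⊂ X a curve of degree d, and E an effective Cartier divisor on X linearly equivalent to e·H (H = hyperplane class) such that C ⊂ D + E for some divisor D. Suppose the scheme C₁ defined by I_{C₁} = I_C : I_E has dimension 1 of degree d₁, and C ∩ E is a curve of degree d₂. Then d = d₁ + d₂ and p_a(C) = p_a(C₁) + p_a(C∩E) + e·d₁ − 1. -/
open MvPolynomial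

attribute [local instance] MvPolynomial.gradedAlgebra

set_option maxHeartbeats 1000000
set_option synthInstance.maxHeartbeats 400000

instance instFD (m n : ℕ) : FiniteDimensional ℂ (homogeneousSubmodule (Fin m) ℂ n) := by
  rw [homogeneousSubmodule_eq_finsupp_supported]
  haveI : Finite {d : Fin m →₀ ℕ | d.degree = n} :=
    (Finsupp.finite_of_degree_le n).subset (fun d hd => le_of_eq hd)
  exact Module.Finite.equiv (AddMonoidAlgebra.supportedEquivFinsupp _).symm

lemma hilb_eq {m : ℕ} (I : Ideal (MvPolynomial (Fin m) ℂ)) (n : ℕ) :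
    hilb I n
      + Module.finrank ℂ (I.restrictScalars ℂ ⊓ homogeneousSubmodule (Fin m) ℂ n :
          Submodule ℂ (MvPolynomial (Fin m) ℂ))
      = Module.finrank ℂ (homogeneousSubmodule (Fin m) ℂ n) := by
  set V := homogeneousSubmodule (Fin m) ℂ n
  set π := (Ideal.Quotient.mkₐ ℂ I).toLinearMap
  have h1 : Submodule.map π V = LinearMap.range (π ∘ₗ V.subtype) := by
    rw [LinearMap.range_comp, Submodule.range_subtype]
  have hker : LinearMap.ker (π ∘ₗ V.subtype)
      = Submodule.comap V.subtype (I.restrictScalars ℂ ⊓ V) := by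
    ext x
    simp only [LinearMap.mem_ker, LinearMap.comp_apply, Submodule.coe_subtype,
      Submodule.mem_comap, Submodule.mem_inf, Submodule.restrictScalars_mem]
    have hx : π ↑x = 0 ↔ (x : MvPolynomial (Fin m) ℂ) ∈ I := by
      rw [show π ↑x = Ideal.Quotient.mk I ↑x from rfl]
      exact Ideal.Quotient.eq_zero_iff_mem
    rw [hx]
    exact ⟨fun h => ⟨h, x.2⟩, fun h => h.1⟩
  have hRN := LinearMap.finrank_range_add_finrank_ker (π ∘ₗ V.subtype)
  have e2 : Module.finrank ℂ (Submodule.comap V.subtype (I.restrictScalars ℂ ⊓ V))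
      = Module.finrank ℂ (I.restrictScalars ℂ ⊓ V : Submodule ℂ (MvPolynomial (Fin m) ℂ)) :=
    (Submodule.comapSubtypeEquivOfLe inf_le_right).finrank_eq
  unfold hilb
  rw [h1, ← e2, ← hker]
  exact hRN

lemma key {m : ℕ} (e : ℕ) (J : Ideal (MvPolynomial (Fin m) ℂ))
    (hJ : J.IsHomogeneous (MvPolynomial.homogeneousSubmodule (Fin m) ℂ))
    (gE : MvPolynomial (Fin m) ℂ) (hgE : gE ∈ homogeneousSubmodule (Fin m) ℂ e) (i : ℕ) :
    hilb J (i + e)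
      = hilb (Submodule.colon J (Ideal.span {gE})) i + hilb (J ⊔ Ideal.span {gE}) (i + e) := by
  classical
  set Vi := homogeneousSubmodule (Fin m) ℂ i with hVi
  set Vie := homogeneousSubmodule (Fin m) ℂ (i + e) with hVie
  set Q : Ideal (MvPolynomial (Fin m) ℂ) := Submodule.colon J (Ideal.span {gE}) with hQ
  set S : Ideal (MvPolynomial (Fin m) ℂ) := J ⊔ Ideal.span {gE} with hS
  set τ : MvPolynomial (Fin m) ℂ →ₗ[ℂ] MvPolynomial (Fin m) ℂ := LinearMap.mulLeft ℂ gE with hτ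
  set T : Submodule ℂ (MvPolynomial (Fin m) ℂ) := Submodule.map τ Vi with hT
  have hcomp : ∀ n : ℕ, ∀ f ∈ J, homogeneousComponent n f ∈ J := by
    intro n f hf
    have := hJ n hf
    rwa [← decomposition.decompose'_apply]
  have hTV : T ≤ Vie := by
    rintro _ ⟨x, hx, rfl⟩
    have h1 : (gE * x).IsHomogeneous (e + i) := MvPolynomial.IsHomogeneous.mul hgE hx
    rw [add_comm] at h1
    exact h1
  -- key submodule identity
  have hSsub : S.restrictScalars ℂ ⊓ Vie = (J.restrictScalars ℂ ⊓ Vie) ⊔ T := by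
    apply le_antisymm
    · rintro f ⟨hfS, hfV⟩
      obtain ⟨a, ha, b, hb, rfl⟩ := Submodule.mem_sup.1 hfS
      obtain ⟨h, rfl⟩ := Ideal.mem_span_singleton'.1 hb
      have hfc : homogeneousComponent (i + e) (a + h * gE) = a + h * gE := by
        rw [homogeneousComponent_of_mem hfV, if_pos rfl]
      have hca : homogeneousComponent (i + e) a ∈ (J.restrictScalars ℂ ⊓ Vie) :=
        ⟨hcomp _ a ha, homogeneousComponent_isHomogeneous _ a⟩
      have hcb : homogeneousComponent (i + e) (h * gE) ∈ T := by
        have hrepr : h * gE = ∑ j ∈ Finset.range (h.totalDegree + 1),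
            homogeneousComponent j h * gE := by
          rw [← Finset.sum_mul, sum_homogeneousComponent]
        rw [hrepr, map_sum]
        refine Submodule.sum_mem _ fun j _ => ?_
        have hj : (homogeneousComponent j h * gE) ∈ homogeneousSubmodule (Fin m) ℂ (j + e) :=
          (homogeneousComponent_isHomogeneous j h).mul hgE
        rw [homogeneousComponent_of_mem hj]
        split_ifs with hje
        · have hji : j = i := by omega
          subst hji
          exact ⟨homogeneousComponent j h, homogeneousComponent_isHomogeneous j h,
            by simp [τ, LinearMap.mulLeft_apply, mul_comm]⟩
        · exact Submodule.zero_mem _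
      have heq : a + h * gE
          = homogeneousComponent (i + e) a + homogeneousComponent (i + e) (h * gE) := by
        rw [← map_add, hfc]
      rw [heq]
      exact Submodule.add_mem _ (Submodule.mem_sup_left hca) (Submodule.mem_sup_right hcb)
    · refine sup_le (fun x hx => ⟨Submodule.mem_sup_left hx.1, hx.2⟩) ?_
      rintro _ ⟨x, hx, rfl⟩
      refine ⟨Submodule.mem_sup_right ?_, hTV ⟨x, hx, rfl⟩⟩
      exact Ideal.mem_span_singleton.2 (Dvd.intro x rfl)
  -- finite dimensionality
  haveI : FiniteDimensional ℂ T := Submodule.finiteDimensional_of_le hTV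
  haveI : FiniteDimensional ℂ (J.restrictScalars ℂ ⊓ Vie : Submodule ℂ (MvPolynomial (Fin m) ℂ)) :=
    Submodule.finiteDimensional_of_le inf_le_right
  -- rank-nullity for t' : Vi → R ⧸ J
  set J' : Submodule ℂ (MvPolynomial (Fin m) ℂ) := J.restrictScalars ℂ with hJ'
  set t' : Vi →ₗ[ℂ] MvPolynomial (Fin m) ℂ ⧸ J' := J'.mkQ ∘ₗ (τ ∘ₗ Vi.subtype) with ht'
  have hker1 : LinearMap.ker t' = Submodule.comap Vi.subtype (Q.restrictScalars ℂ ⊓ Vi) := by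
    ext x
    have : t' x = 0 ↔ gE * (x : MvPolynomial (Fin m) ℂ) ∈ J' := by
      rw [ht']
      simp [hτ, LinearMap.mulLeft_apply, Submodule.Quotient.mk_eq_zero]
    rw [LinearMap.mem_ker, this]
    simp only [Submodule.mem_comap, Submodule.mem_inf, Submodule.restrictScalars_mem, hJ']
    constructor
    · intro hgx
      exact ⟨Submodule.mem_colon_span_singleton.2 (by rwa [smul_eq_mul, mul_comm]), x.2⟩
    · intro hx
      have := Submodule.mem_colon_span_singleton.1 hx.1
      rwa [smul_eq_mul, mul_comm] at this
  have hrange1 : LinearMap.range t' = Submodule.map J'.mkQ T := by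
    rw [ht', LinearMap.range_comp, LinearMap.range_comp, Submodule.range_subtype]
  have e1 : Module.finrank ℂ (Submodule.comap Vi.subtype (Q.restrictScalars ℂ ⊓ Vi))
      = Module.finrank ℂ (Q.restrictScalars ℂ ⊓ Vi : Submodule ℂ (MvPolynomial (Fin m) ℂ)) :=
    (Submodule.comapSubtypeEquivOfLe inf_le_right).finrank_eq
  have hRN1 := LinearMap.finrank_range_add_finrank_ker t'
  rw [hrange1, hker1, e1] at hRN1
  -- rank-nullity for u : T → R ⧸ J
  set u : T →ₗ[ℂ] MvPolynomial (Fin m) ℂ ⧸ J' := J'.mkQ ∘ₗ T.subtype with hu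
  have hker2 : LinearMap.ker u = Submodule.comap T.subtype (J' ⊓ T) := by
    ext x
    simp only [hu, LinearMap.mem_ker, LinearMap.comp_apply, Submodule.coe_subtype,
      Submodule.mkQ_apply, Submodule.Quotient.mk_eq_zero, Submodule.mem_comap,
      Submodule.mem_inf]
    exact ⟨fun hx => ⟨hx, x.2⟩, fun hx => hx.1⟩
  have hrange2 : LinearMap.range u = Submodule.map J'.mkQ T := by
    rw [hu, LinearMap.range_comp, Submodule.range_subtype]
  have e2 : Module.finrank ℂ (Submodule.comap T.subtype (J' ⊓ T))
      = Module.finrank ℂ (J' ⊓ T : Submodule ℂ (MvPolynomial (Fin m) ℂ)) :=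
    (Submodule.comapSubtypeEquivOfLe inf_le_right).finrank_eq
  have hRN2 := LinearMap.finrank_range_add_finrank_ker u
  rw [hrange2, hker2, e2] at hRN2
  -- sup/inf dimension formula
  have hsupinf := Submodule.finrank_sup_add_finrank_inf_eq (J' ⊓ Vie) T
  have hinf2 : (J' ⊓ Vie) ⊓ T = J' ⊓ T := by
    rw [inf_assoc, inf_eq_right.2 hTV]
  rw [hinf2] at hsupinf
  -- hilb identities
  have h1 := hilb_eq J (i + e)
  have h2 := hilb_eq Q i
  have h3 := hilb_eq S (i + e)
  rw [show Submodule.restrictScalars ℂ J ⊓ homogeneousSubmodule (Fin m) ℂ (i + e) = J' ⊓ Vie from rfl] at h1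
  rw [show Submodule.restrictScalars ℂ Q ⊓ homogeneousSubmodule (Fin m) ℂ i
      = Submodule.restrictScalars ℂ Q ⊓ Vi from rfl] at h2
  rw [show Submodule.restrictScalars ℂ S ⊓ homogeneousSubmodule (Fin m) ℂ (i + e)
      = Submodule.restrictScalars ℂ S ⊓ Vie from rfl, hSsub,
    show homogeneousSubmodule (Fin m) ℂ (i + e) = Vie from rfl] at h3
  rw [show homogeneousSubmodule (Fin m) ℂ (i + e) = Vie from rfl] at h1
  rw [show homogeneousSubmodule (Fin m) ℂ i = Vi from rfl] at h2
  omega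

/-- Degree/genus additivity: `X ⊂ ℙʳ` is an integral projective threefold, cut out by
the prime homogeneous ideal `P`; `C ⊂ X` is a curve of degree `d` and arithmetic genus
`p` (homogeneous ideal `I_C ⊇ P` with Hilbert polynomial `d·i + 1 − p`); the effective
Cartier divisor `E ∼ e·H` is cut on `X` by a form `g_E` of degree `e`, and `C ⊂ D + E`
for some divisor `D = {f_D = 0} ∩ X` (so `f_D·g_E ∈ I_C`).  If the scheme `C₁` defined
by the ideal quotient `I_{C₁} = I_C : I_E = I_C : (g_E)` has dimension 1 with degree
`d₁` and genus `p₁`, and `C ∩ E` (ideal `I_C + (g_E)`) is a curve of degree `d₂` and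
genus `p₂`, then `d = d₁ + d₂` and `p = p₁ + p₂ + e·d₁ − 1`. -/
theorem stmt_14 (r : ℕ) (P : Ideal (MvPolynomial (Fin (r + 1)) ℂ))
    (hPhom : P.IsHomogeneous (MvPolynomial.homogeneousSubmodule (Fin (r + 1)) ℂ))
    (hPprime : P.IsPrime)
    (IC : Ideal (MvPolynomial (Fin (r + 1)) ℂ))
    (hIChom : IC.IsHomogeneous (MvPolynomial.homogeneousSubmodule (Fin (r + 1)) ℂ))
    (hPC : P ≤ IC)
    (d : ℕ) (hd : 0 < d) (p : ℤ)
    (hC : ∃ N : ℕ, ∀ i ≥ N, (hilb IC i : ℤ) = d * i + (1 - p))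
    (e : ℕ) (he : 0 < e) (gE : MvPolynomial (Fin (r + 1)) ℂ)
    (hgEhom : gE ∈ MvPolynomial.homogeneousSubmodule (Fin (r + 1)) ℂ e) (hgE : gE ∉ P)
    (hCDE : ∃ fD : MvPolynomial (Fin (r + 1)) ℂ, fD ∉ P ∧ fD * gE ∈ IC)
    (d₁ : ℕ) (hd₁ : 0 < d₁) (p₁ : ℤ)
    (hC₁ : ∃ N : ℕ, ∀ i ≥ N,
      (hilb (Submodule.colon IC (Ideal.span {gE})) i : ℤ) = d₁ * i + (1 - p₁))
    (d₂ : ℕ) (hd₂ : 0 < d₂) (p₂ : ℤ)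
    (hCE : ∃ N : ℕ, ∀ i ≥ N, (hilb (IC ⊔ Ideal.span {gE}) i : ℤ) = d₂ * i + (1 - p₂)) :
    d = d₁ + d₂ ∧ p = p₁ + p₂ + (e : ℤ) * d₁ - 1 := by
  obtain ⟨N, hN⟩ := hC
  obtain ⟨N₁, hN₁⟩ := hC₁
  obtain ⟨N₂, hN₂⟩ := hCE
  set M : ℕ := N + N₁ + N₂ with hM
  have keyEq : ∀ i : ℕ, i ≥ M →
      (d : ℤ) * (i + e) + (1 - p) = d₁ * i + (1 - p₁) + (d₂ * (i + e) + (1 - p₂)) := by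
    intro i hi
    have hk := key e IC hIChom gE hgEhom i
    have hkz : (hilb IC (i + e) : ℤ)
        = (hilb (Submodule.colon IC (Ideal.span {gE})) i : ℤ)
          + (hilb (IC ⊔ Ideal.span {gE}) (i + e) : ℤ) := by exact_mod_cast hk
    rw [hN (i + e) (by omega), hN₁ i (by omega), hN₂ (i + e) (by omega)] at hkz
    push_cast at hkz ⊢
    linarith
  have hA := keyEq M le_rfl
  have hB := keyEq (M + 1) (by omega)
  have hg1 : (d : ℤ) = d₁ + d₂ := by push_cast at hA hB ⊢; linear_combination hB - hA
  constructor
  · exact_mod_cast hg1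
  · push_cast at hA
    linear_combination ((M : ℤ) + e) * hg1 - hA
end

section
/- Let n, s₀, d be positive integers with s₀ > n, let ν = (4/3)n(n+1), π_X ≥ 0 an integer, and π₀ a rational with −2 ≤ (2π₀ − 2 − s₀)/(2s₀) ≤ s₀ and s₀ ≤ ν. If d > 6n²·( (n²/2)·((2/3)(n+1) + 4 + 2ν⁶)² )², then d²/(2s₀) + (d/(2s₀))(2π₀ − 2 − s₀) + 4ν⁶ ≤ d²/(2n) + (d/(2n))(2π_X − 2 − n) − (1/n)√d. -/
set_option maxHeartbeats 1000000 in
/-- Numerical estimate for case 2) of Corollary cor1: with `ν = (4/3)n(n+1)`,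
`M(n) = (n²/2)((2/3)(n+1) + 4 + 2ν⁶)²`, if `s₀ > n`, `−2 ≤ (2π₀−2−s₀)/(2s₀) ≤ s₀`,
`s₀ ≤ ν` and `d > 6n²·M(n)²`, then
`d²/(2s₀) + (d/(2s₀))(2π₀−2−s₀) + 4ν⁶ ≤ d²/(2n) + (d/(2n))(2π_X−2−n) − (1/n)√d`. -/
theorem stmt_19 (n s₀ d : ℕ) (hn : 0 < n) (hs₀ : n < s₀) (πX : ℤ) (hπX : 0 ≤ πX) (π₀ : ℚ)
    (hπ₀l : (-2 : ℝ) ≤ (2 * (π₀ : ℝ) - 2 - s₀) / (2 * s₀))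
    (hπ₀u : (2 * (π₀ : ℝ) - 2 - s₀) / (2 * s₀) ≤ (s₀ : ℝ))
    (hs₀ν : (s₀ : ℝ) ≤ (4 : ℝ) / 3 * n * (n + 1))
    (hd : (d : ℝ) > 6 * n ^ 2 *
      ((n : ℝ) ^ 2 / 2 * (2 / 3 * ((n : ℝ) + 1) + 4
        + 2 * ((4 : ℝ) / 3 * n * (n + 1)) ^ 6) ^ 2) ^ 2) :
    (d : ℝ) ^ 2 / (2 * s₀) + (d : ℝ) / (2 * s₀) * (2 * (π₀ : ℝ) - 2 - s₀)
        + 4 * ((4 : ℝ) / 3 * n * (n + 1)) ^ 6 ≤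
      (d : ℝ) ^ 2 / (2 * n) + (d : ℝ) / (2 * n) * (2 * (πX : ℝ) - 2 - n)
        - 1 / n * Real.sqrt d := by
  have hN : (1:ℝ) ≤ (n:ℝ) := by exact_mod_cast hn
  have hN0 : (0:ℝ) < (n:ℝ) := by linarith
  have hN0' : (n:ℝ) ≠ 0 := ne_of_gt hN0
  have hN1' : (n:ℝ) + 1 ≠ 0 := by positivity
  have hS : (n:ℝ) + 1 ≤ (s₀:ℝ) := by exact_mod_cast hs₀
  have hS0 : (0:ℝ) < (s₀:ℝ) := by linarith
  obtain ⟨ν, hνdef⟩ : ∃ ν : ℝ, ν = (4:ℝ)/3 * n * (n+1) := ⟨_, rfl⟩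
  rw [← hνdef] at hs₀ν hd ⊢
  have hν1 : (1:ℝ) ≤ ν := by rw [hνdef]; nlinarith
  have hν0 : (0:ℝ) < ν := by linarith
  have hν7 : (0:ℝ) < ν^7 := by positivity
  -- d is large
  obtain ⟨C, hCdef⟩ : ∃ C : ℝ, C = 2/3*((n:ℝ)+1) + 4 + 2*ν^6 := ⟨_, rfl⟩
  rw [← hCdef] at hd
  obtain ⟨E, hEdef⟩ : ∃ E : ℝ, E = (n:ℝ)^2/2 * C^2 := ⟨_, rfl⟩
  rw [← hEdef] at hd
  have hC : 2*ν^6 ≤ C := by rw [hCdef]; nlinarith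
  have hd24 : 24*ν^24 < (d:ℝ) := by
    have hC2 : (2*ν^6)^2 ≤ C^2 := pow_le_pow_left₀ (by positivity) hC 2
    have hE : 2*ν^12 ≤ E := by
      rw [hEdef]
      nlinarith [mul_nonneg (by nlinarith : (0:ℝ) ≤ (n:ℝ)^2 - 1) (sq_nonneg C)]
    have hE2 : (2*ν^12)^2 ≤ E^2 := pow_le_pow_left₀ (by positivity) hE 2
    nlinarith [mul_nonneg (by nlinarith : (0:ℝ) ≤ (n:ℝ)^2 - 1) (sq_nonneg E)]
  have hd12 : 12*ν^7 ≤ (d:ℝ) := by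
    have : ν^7 ≤ ν^24 := pow_le_pow_right₀ hν1 (by norm_num)
    linarith
  have hd1 : (1:ℝ) ≤ (d:ℝ) := by
    have : (1:ℝ) ≤ ν^24 := one_le_pow₀ hν1
    linarith
  have hd0 : (0:ℝ) ≤ (d:ℝ) := by linarith
  -- sqrt bound
  have hsq : Real.sqrt d ≤ (d:ℝ) := by
    nlinarith [Real.sq_sqrt hd0, Real.sqrt_nonneg (d:ℝ),
      Real.sqrt_le_sqrt (by nlinarith : (d:ℝ) ≤ (d:ℝ)^2)]
  -- term bounds
  have t1 : (d:ℝ)^2/(2*s₀) ≤ (d:ℝ)^2/(2*((n:ℝ)+1)) :=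
    div_le_div_of_nonneg_left (by positivity) (by linarith) (by linarith)
  have hA : (2*(π₀:ℝ) - 2 - s₀)/(2*s₀) ≤ ν := le_trans hπ₀u hs₀ν
  have t2 : (d:ℝ)/(2*s₀) * (2*(π₀:ℝ)-2-s₀) ≤ (d:ℝ)*ν := by
    have he : (d:ℝ)/(2*s₀) * (2*(π₀:ℝ)-2-s₀) = (d:ℝ) * ((2*(π₀:ℝ)-2-s₀)/(2*s₀)) := by
      ring
    rw [he]
    exact mul_le_mul_of_nonneg_left hA hd0
  have t3 : (d:ℝ)/(2*n) * (-2 - (n:ℝ)) ≤ (d:ℝ)/(2*n) * (2*(πX:ℝ)-2-n) := by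
    apply mul_le_mul_of_nonneg_left _ (by positivity)
    have : (0:ℝ) ≤ (πX:ℝ) := by exact_mod_cast hπX
    linarith
  have t4 : 1/(n:ℝ) * Real.sqrt d ≤ (d:ℝ)/n := by
    rw [one_div, inv_mul_eq_div]
    exact (div_le_div_iff_of_pos_right hN0).mpr hsq
  -- core inequality
  have hid : (d:ℝ)^2/(2*n) - (d:ℝ)^2/(2*((n:ℝ)+1)) = (d:ℝ)^2/(2*n*((n:ℝ)+1)) := by
    field_simp
    ring
  have b2 : (d:ℝ)*((n:ℝ)+2)/(2*n) ≤ 3/2*(d:ℝ) := by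
    rw [div_le_iff₀ (by positivity)]
    nlinarith
  have b3 : (d:ℝ)/n ≤ (d:ℝ) := div_le_self hd0 hN
  have b4 : (d:ℝ)*ν + 4*ν^6 + 3/2*(d:ℝ) + (d:ℝ) ≤ (d:ℝ)^2/(2*n*((n:ℝ)+1)) := by
    rw [le_div_iff₀ (by positivity)]
    have h32 : 2*(n:ℝ)*((n:ℝ)+1) = 3/2*ν := by rw [hνdef]; ring
    rw [h32]
    have A2 : ν^2*(d:ℝ) ≤ ν^7*(d:ℝ) :=
      mul_le_mul_of_nonneg_right (pow_le_pow_right₀ hν1 (by norm_num)) hd0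
    have A3 : ν*(d:ℝ) ≤ ν^7*(d:ℝ) := by
      have : ν^1 ≤ ν^7 := pow_le_pow_right₀ hν1 (by norm_num)
      nlinarith
    have A4 : ν^7 ≤ ν^7*(d:ℝ) := by nlinarith
    have A1 : 12*ν^7*(d:ℝ) ≤ (d:ℝ)*(d:ℝ) := by nlinarith
    nlinarith
  have he2 : (d:ℝ)/(2*n) * (-2 - (n:ℝ)) = -((d:ℝ)*((n:ℝ)+2)/(2*n)) := by ring
  -- assemble
  have main : (d:ℝ)^2/(2*((n:ℝ)+1)) + (d:ℝ)*ν + 4*ν^6 ≤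
      (d:ℝ)^2/(2*n) + (d:ℝ)/(2*n)*(-2-(n:ℝ)) - (d:ℝ)/n := by
    rw [he2]
    linarith
  linarith
end
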